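/- Let R : ℝ → SO(3) satisfy Ṙ = R Ω̂ and R_d : ℝ → SO(3) satisfy Ṙ_d = R_d Ω̂_d, with e_Ω = Ω − Rᵀ R_d Ω_d and e_R = ½(R_dᵀ R − Rᵀ R_d)^∨. Then ė_R = ½ (tr(Rᵀ R_d) I − Rᵀ R_d) e_Ω. -/

import Mathlib

open Matrix
open scoped Matrix

noncomputable section

attribute [local instance] Matrix.normedAddCommGroup Matrix.normedSpace

/-- The hat map `ℝ³ → so(3)`, sending `x` to the skew matrix with `hat x *ᵥ y = x ×₃ y`. -/
def hat (x : Fin 3 → ℝ) : Matrix (Fin 3) (Fin 3) ℝ :=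
  !![0, -x 2, x 1; x 2, 0, -x 0; -x 1, x 0, 0]

/-- The vee map, inverse of the hat map on skew-symmetric matrices. -/
def vee (S : Matrix (Fin 3) (Fin 3) ℝ) : Fin 3 → ℝ := ![S 2 1, S 0 2, S 1 0]

/-- `SO(3)`: rotation matrices. -/
def SO3 : Set (Matrix (Fin 3) (Fin 3) ℝ) := {R | Rᵀ * R = 1 ∧ R.det = 1}

/-- Euclidean inner product on `ℝ³`. -/
def dot (x y : Fin 3 → ℝ) : ℝ := ∑ i, x i * y i

/-- Euclidean norm on `ℝ³`. -/
def norm3 (x : Fin 3 → ℝ) : ℝ := Real.sqrt (dot x x)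

/-- Attitude error function on `SO(3) × SO(3)`. -/
def Psi (R Rd : Matrix (Fin 3) (Fin 3) ℝ) : ℝ := (1/2 : ℝ) * (1 - Rdᵀ * R).trace

/-- Attitude error vector. -/
def eR (R Rd : Matrix (Fin 3) (Fin 3) ℝ) : Fin 3 → ℝ := (1/2 : ℝ) • vee (Rdᵀ * R - Rᵀ * Rd)

/-!
With `Q = Rᵀ R_d`, differentiating `R_dᵀ R - Rᵀ R_d` along `Ṙ = R Ω̂`, `Ṙ_d = R_d Ω̂_d` gives
`(Ω̂ Q + Qᵀ Ω̂) - (Ω̂_d Qᵀ + Q Ω̂_d)`, and the identity `x̂ B + Bᵀ x̂ = (((tr B) I - B) x)^` turns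
this into the hat of `((tr Q) I - Q) Ω - ((tr Q) I - Qᵀ) Ω_d`. For a rotation `Qᵀ = adj Q`, so
Cayley–Hamilton gives `((tr Q) I - Q) Q = (tr Q) I - Qᵀ`, and `((tr Q) I - Q)` factors out of `e_Ω`.
-/

theorem Matrix.adjugate_fin_three_eq (A : Matrix (Fin 3) (Fin 3) ℝ) :
    A.adjugate = A * A - A.trace • A + ((A.trace ^ 2 - (A * A).trace) / 2) • 1 := by
  ext i j
  fin_cases i <;> fin_cases j <;>
    simp [adjugate_fin_three, trace_fin_three, mul_apply, Fin.sum_univ_three] <;> ring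

section MatrixCalculus

variable {m n p : Type*} {t : ℝ}

theorem HasDerivAt.matrix_apply [Fintype n] {A : ℝ → Matrix m n ℝ} {A' : Matrix m n ℝ}
    (hA : HasDerivAt A A' t) (i : m) (j : n) : HasDerivAt (fun s => A s i j) (A' i j) t :=
  hasDerivAt_pi.mp (hasDerivAt_pi.mp hA i) j

theorem HasDerivAt.matrix_transpose [Fintype m] [Fintype n] {A : ℝ → Matrix m n ℝ}
    {A' : Matrix m n ℝ} (hA : HasDerivAt A A' t) : HasDerivAt (fun s => (A s)ᵀ) A'ᵀ t :=
  hasDerivAt_pi.mpr fun i => hasDerivAt_pi.mpr fun j => hA.matrix_apply j i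

theorem HasDerivAt.matrix_mul [Fintype n] [Fintype p] {A : ℝ → Matrix m n ℝ}
    {B : ℝ → Matrix n p ℝ} {A' : Matrix m n ℝ} {B' : Matrix n p ℝ} (hA : HasDerivAt A A' t)
    (hB : HasDerivAt B B' t) :
    HasDerivAt (fun s => A s * B s) (A' * B t + A t * B') t := by
  refine hasDerivAt_pi.mpr fun i => hasDerivAt_pi.mpr fun j => ?_
  simpa only [Matrix.mul_apply, Matrix.add_apply, ← Finset.sum_add_distrib] using
    HasDerivAt.fun_sum fun k _ => (hA.matrix_apply i k).fun_mul (hB.matrix_apply k j)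

end MatrixCalculus

theorem vee_hat (x : Fin 3 → ℝ) : vee (hat x) = x := by
  funext i; fin_cases i <;> simp [vee, hat]

theorem hat_sub (x y : Fin 3 → ℝ) : hat (x - y) = hat x - hat y := by
  ext i j; fin_cases i <;> fin_cases j <;> simp [hat] <;> ring

theorem hat_transpose (x : Fin 3 → ℝ) : (hat x)ᵀ = -hat x := by
  ext i j; fin_cases i <;> fin_cases j <;> simp [hat]

theorem hat_mul_add_transpose_mul_hat (x : Fin 3 → ℝ) (B : Matrix (Fin 3) (Fin 3) ℝ) :
    hat x * B + Bᵀ * hat x = hat ((B.trace • 1 - B) *ᵥ x) := by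
  ext i j
  fin_cases i <;> fin_cases j <;>
    simp [hat, mul_apply, mulVec, vecMul, trace_fin_three, dotProduct, Fin.sum_univ_three,
      one_apply] <;> ring

theorem HasDerivAt.vee {S : ℝ → Matrix (Fin 3) (Fin 3) ℝ} {S' : Matrix (Fin 3) (Fin 3) ℝ}
    {t : ℝ} (hS : HasDerivAt S S' t) : HasDerivAt (fun s => vee (S s)) (vee S') t := by
  refine hasDerivAt_pi.mpr fun i => ?_
  fin_cases i <;> exact hS.matrix_apply _ _

theorem transpose_mul_mem_SO3 {P Q : Matrix (Fin 3) (Fin 3) ℝ} (hP : P ∈ SO3) (hQ : Q ∈ SO3) :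
    Pᵀ * Q ∈ SO3 := by
  obtain ⟨hP₁, hP₂⟩ := hP
  obtain ⟨hQ₁, hQ₂⟩ := hQ
  refine ⟨?_, by rw [det_mul, det_transpose, hP₂, hQ₂, one_mul]⟩
  rw [transpose_mul, transpose_transpose, Matrix.mul_assoc, ← Matrix.mul_assoc P,
    mul_eq_one_comm.mp hP₁, Matrix.one_mul, hQ₁]

theorem transpose_eq_of_mem_SO3 {Q : Matrix (Fin 3) (Fin 3) ℝ} (hQ : Q ∈ SO3) :
    Qᵀ = Q * Q - Q.trace • Q + Q.trace • 1 := by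
  obtain ⟨hQ₁, hQ₂⟩ := hQ
  have hadj : Qᵀ = Q.adjugate := by
    rw [← Matrix.mul_one Qᵀ, ← one_smul ℝ (1 : Matrix _ _ ℝ), ← hQ₂, ← mul_adjugate,
      ← Matrix.mul_assoc, hQ₁, Matrix.one_mul]
  set c := (Q.trace ^ 2 - (Q * Q).trace) / 2 with hc
  have hQT : Qᵀ = Q * Q - Q.trace • Q + c • 1 := by rw [hadj, adjugate_fin_three_eq]
  have htrace : Q.trace = (Q * Q).trace - Q.trace * Q.trace + c * 3 := by
    simpa [trace_add, trace_sub, trace_smul, trace_one] using congrArg trace hQT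
  -- `tr Qᵀ = tr Q` pins down the constant coefficient of the Cayley–Hamilton form
  have hc_eq : c = Q.trace := by linarith [hc]
  rwa [hc_eq] at hQT

theorem trace_smul_one_sub_mul_of_mem_SO3 {Q : Matrix (Fin 3) (Fin 3) ℝ} (hQ : Q ∈ SO3) :
    (Q.trace • 1 - Q) * Q = Q.trace • 1 - Qᵀ := by
  rw [transpose_eq_of_mem_SO3 hQ, Matrix.sub_mul, smul_mul_assoc, Matrix.one_mul]
  abel

theorem hasDerivAt_transpose_mul_sub {R Rd : ℝ → Matrix (Fin 3) (Fin 3) ℝ} {ω ωd : Fin 3 → ℝ}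
    {t : ℝ} (hR : HasDerivAt R (R t * hat ω) t) (hRd : HasDerivAt Rd (Rd t * hat ωd) t) :
    HasDerivAt (fun s => (Rd s)ᵀ * R s - (R s)ᵀ * Rd s)
      (hat ((((R t)ᵀ * Rd t).trace • 1 - (R t)ᵀ * Rd t) *ᵥ ω
        - (((R t)ᵀ * Rd t).trace • 1 - ((R t)ᵀ * Rd t)ᵀ) *ᵥ ωd)) t := by
  refine ((hRd.matrix_transpose.matrix_mul hR).sub
    (hR.matrix_transpose.matrix_mul hRd)).congr_deriv ?_
  set Q := (R t)ᵀ * Rd t with hQ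
  have hωd := hat_mul_add_transpose_mul_hat ωd Qᵀ
  rw [transpose_transpose, trace_transpose] at hωd
  rw [hat_sub, ← hat_mul_add_transpose_mul_hat, ← hωd, hQ]
  simp only [transpose_mul, transpose_transpose, hat_transpose]
  noncomm_ring

/-- `ė_R = ½(tr(RᵀR_d) I − RᵀR_d) e_Ω`. -/
theorem eR_deriv (R Rd : ℝ → Matrix (Fin 3) (Fin 3) ℝ) (Ω Ωd : ℝ → Fin 3 → ℝ) (t : ℝ)
    (hR : ∀ s, R s ∈ SO3) (hRd : ∀ s, Rd s ∈ SO3)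
    (hdR : ∀ s, HasDerivAt R (R s * hat (Ω s)) s)
    (hdRd : ∀ s, HasDerivAt Rd (Rd s * hat (Ωd s)) s) :
    HasDerivAt (fun s => eR (R s) (Rd s))
      ((1/2 : ℝ) • ((((R t)ᵀ * Rd t).trace • (1 : Matrix (Fin 3) (Fin 3) ℝ) - (R t)ᵀ * Rd t)
        *ᵥ (Ω t - ((R t)ᵀ * Rd t) *ᵥ Ωd t))) t := by
  have hQ := trace_smul_one_sub_mul_of_mem_SO3 (transpose_mul_mem_SO3 (hR t) (hRd t))
  refine ((hasDerivAt_transpose_mul_sub (hdR t) (hdRd t)).vee.const_smul (1/2 : ℝ)).congr_deriv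
    ?_
  rw [vee_hat, mulVec_sub, mulVec_mulVec, hQ]
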